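/- arXiv:math/0603209 — 4 statements merged into one kernel-verified Lean document; each statement's English description precedes it below -/
import Mathlib

section
/- Smallest eigenvalue via odd flows: Let q̃ and q be symmetric probability measures on a finite group G and S ⊆ supp(q) a symmetric set. Suppose η is a (q̃,q)-odd flow, i.e., a nonnegative function on odd-length paths in the Cayley graph (G,S) from the identity, such that for each y the total flow along odd paths from e to y equals q̃(y). Then the least eigenvalues satisfy β_min ≥ −1 + (1 + β̃_min)/A(η), where A(η) = max_{s∈S} (1/q(s)) Σ_δ |δ|·N(s,δ)·η(δ) and N(s,δ) counts the uses of generator s along δ. -/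
/-!
Let `f` be an eigenfunction of `q` for `β` and write `E(y) = ∑ₓ (f x + f (x y))²`. For any
probability measure `p`, `∑ p E = 2 ‖f‖² + 2 ⟪f, P f⟫`, so `∑ q E = 2 (1 + β) ‖f‖²`, while the
Rayleigh quotient gives `∑ q̃ E ≥ 2 (1 + β̃_min) ‖f‖²`. Along an odd path `δ` with steps `sᵢ`,
`f x + f (x δ)` is an alternating sum of the increments `f (x pᵢ) + f (x pᵢ sᵢ)` over the prefixes
`pᵢ`, so Cauchy–Schwarz and translation invariance give `E(δ) ≤ |δ| ∑ᵢ E(sᵢ)`. Averaging over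
the flow yields `∑ q̃ E ≤ A ∑ q E`, hence `1 + β̃_min ≤ A (1 + β)`.
-/

/-- `β` is an eigenvalue of the Markov operator `Qf(x) = Σ_y f(xy) q(y)` of `q`. -/
def IsEig {G : Type*} [Fintype G] [Group G] (q : G → ℝ) (β : ℝ) : Prop :=
  ∃ f : G → ℝ, f ≠ 0 ∧ ∀ x, ∑ y, f (x * y) * q y = β * f x

open Finset Matrix

theorem LinearMap.IsSymmetric.exists_hasEigenvalue_mul_le_inner
    {E : Type*} [NormedAddCommGroup E] [InnerProductSpace ℝ E] [FiniteDimensional ℝ E]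
    {T : E →ₗ[ℝ] E} (hT : T.IsSymmetric) {x : E} (hx : x ≠ 0) :
    ∃ c, Module.End.HasEigenvalue T c ∧ c * ‖x‖ ^ 2 ≤ inner ℝ (T x) x := by
  have : Nontrivial E := ⟨⟨x, 0, hx⟩⟩
  refine ⟨_, hT.hasEigenvalue_iInf_of_finiteDimensional, ?_⟩
  have hbdd : BddBelow (Set.range fun y : {y : E // y ≠ 0} =>
      RCLike.re (inner ℝ (T y) y) / ‖(y : E)‖ ^ 2) :=
    ⟨-‖LinearMap.toContinuousLinearMap T‖, by
      rintro _ ⟨y, rfl⟩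
      exact neg_le_of_abs_le ((LinearMap.toContinuousLinearMap T).rayleighQuotient_le_norm y)⟩
  rw [← le_div_iff₀ (by positivity)]
  exact ciInf_le hbdd ⟨x, hx⟩

theorem List.sum_map_eq_sum_count_mul {ι : Type*} [DecidableEq ι] {l : List ι} {S : Finset ι}
    (hl : ∀ s ∈ l, s ∈ S) (E : ι → ℝ) :
    (l.map E).sum = ∑ s ∈ S, (l.count s : ℝ) * E s := by
  rw [sum_list_map_count]
  refine (sum_subset (fun s hs => hl s (List.mem_toFinset.1 hs)) fun s _ hs => ?_).trans
    (sum_congr rfl fun s _ => nsmul_eq_mul _ _)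
  rw [List.count_eq_zero_of_not_mem (mt List.mem_toFinset.2 hs), zero_smul]

section MarkovOperator

variable {G : Type*} [Group G]

def markovMatrix (p : G → ℝ) : Matrix G G ℝ :=
  Matrix.of fun x z => p (x⁻¹ * z)

theorem markovMatrix_isHermitian {p : G → ℝ} (hp : ∀ g, p g⁻¹ = p g) :
    (markovMatrix p).IsHermitian := by
  ext x z
  simp [markovMatrix, ← hp (x⁻¹ * z)]

theorem sq_add_le_of_odd_length (f : G → ℝ) {l : List G} (hl : Odd l.length) (x : G) :
    (f x + f (x * l.prod)) ^ 2 ≤ l.length *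
      ∑ i : Fin l.length, (f (x * (l.take i).prod) + f (x * (l.take i).prod * l[i])) ^ 2 := by
  set g : ℕ → ℝ := fun i => (-1) ^ i * f (x * (l.take i).prod)
  have hstep : ∀ i : Fin l.length, g i - g (i + 1) =
      (-1) ^ (i : ℕ) * (f (x * (l.take i).prod) + f (x * (l.take i).prod * l[i])) := by
    intro i
    simp only [g, List.prod_take_succ l i i.2, Fin.getElem_fin, mul_assoc, pow_succ]
    ring
  have htele : f x + f (x * l.prod) = ∑ i : Fin l.length,
      (-1) ^ (i : ℕ) * (f (x * (l.take i).prod) + f (x * (l.take i).prod * l[i])) := by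
    rw [← sum_congr rfl fun i _ => hstep i, Fin.sum_univ_eq_sum_range (fun i => g i - g (i + 1)),
      sum_range_sub']
    simp [g, hl.neg_one_pow]
  rw [htele]
  refine sq_sum_le_card_mul_sum_sq.trans_eq ?_
  simp [mul_pow, ← pow_mul']

variable [Fintype G]

theorem markovMatrix_mulVec (p v : G → ℝ) (x : G) :
    (markovMatrix p *ᵥ v) x = ∑ y, v (x * y) * p y := by
  change ∑ z, p (x⁻¹ * z) * v z = _
  exact (Fintype.sum_equiv (Equiv.mulLeft x) _ _ fun y => by simp [mul_comm]).symm

theorem exists_isEig_mul_sum_sq_le [DecidableEq G] {p : G → ℝ} (hp : ∀ g, p g⁻¹ = p g)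
    {f : G → ℝ} (hf : f ≠ 0) :
    ∃ c, IsEig p c ∧ c * ∑ x, f x ^ 2 ≤ ∑ x, f x * ∑ y, f (x * y) * p y := by
  have hT := isSymmetric_toEuclideanLin_iff.mpr (markovMatrix_isHermitian hp)
  have hf' : WithLp.toLp 2 f ≠ 0 := by simpa using hf
  obtain ⟨c, hc, hle⟩ := hT.exists_hasEigenvalue_mul_le_inner hf'
  obtain ⟨v, hv⟩ := hc.exists_hasEigenvector
  refine ⟨c, ⟨v.ofLp, by simpa using hv.2, fun x => ?_⟩, ?_⟩
  · have := congrArg (fun w : EuclideanSpace ℝ G => w x) (Module.End.mem_eigenspace_iff.1 hv.1)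
    simpa [markovMatrix_mulVec] using this
  · simpa [EuclideanSpace.real_norm_sq_eq, EuclideanSpace.inner_eq_star_dotProduct, dotProduct,
      markovMatrix_mulVec] using hle

def plusEnergy (f : G → ℝ) (y : G) : ℝ := ∑ x, (f x + f (x * y)) ^ 2

theorem plusEnergy_nonneg (f : G → ℝ) (y : G) : 0 ≤ plusEnergy f y :=
  sum_nonneg fun _ _ => sq_nonneg _

theorem plusEnergy_eq (f : G → ℝ) (y : G) :
    plusEnergy f y = 2 * ∑ x, f x ^ 2 + 2 * ∑ x, f x * f (x * y) := by
  have hshift : ∑ x, f (x * y) ^ 2 = ∑ x, f x ^ 2 :=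
    Equiv.sum_comp (Equiv.mulRight y) fun x => f x ^ 2
  simp only [plusEnergy, add_sq, sum_add_distrib, hshift, mul_assoc, ← mul_sum]
  ring

theorem sum_mul_plusEnergy (f p : G → ℝ) :
    ∑ y, p y * plusEnergy f y
      = 2 * (∑ y, p y) * ∑ x, f x ^ 2 + 2 * ∑ x, f x * ∑ y, f (x * y) * p y := by
  have hy : ∀ y, p y * plusEnergy f y
      = 2 * (∑ x, f x ^ 2) * p y + 2 * ∑ x, f x * (f (x * y) * p y) := by
    intro y
    simp only [plusEnergy_eq, ← mul_assoc, ← sum_mul]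
    ring
  simp_rw [hy, sum_add_distrib, ← mul_sum]
  rw [sum_comm]
  simp only [← mul_sum]
  ring

theorem plusEnergy_prod_le (f : G → ℝ) {l : List G} (hl : Odd l.length) :
    plusEnergy f l.prod ≤ l.length * (l.map (plusEnergy f)).sum := by
  calc plusEnergy f l.prod
      ≤ ∑ x, l.length *
          ∑ i : Fin l.length, (f (x * (l.take i).prod) + f (x * (l.take i).prod * l[i])) ^ 2 :=
        sum_le_sum fun x _ => sq_add_le_of_odd_length f hl x
    _ = l.length * ∑ i : Fin l.length, plusEnergy f l[i] := by
        rw [← mul_sum, sum_comm]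
        congr 1
        exact sum_congr rfl fun i _ =>
          Equiv.sum_comp (Equiv.mulRight _) fun x => (f x + f (x * l[i])) ^ 2
    _ = l.length * (l.map (plusEnergy f)).sum := congrArg _ (Fin.sum_univ_fun_getElem l _)

theorem sum_mul_plusEnergy_of_eigen {p f : G → ℝ} {β : ℝ} (hp1 : ∑ g, p g = 1)
    (hf : ∀ x, ∑ y, f (x * y) * p y = β * f x) :
    ∑ y, p y * plusEnergy f y = 2 * (1 + β) * ∑ x, f x ^ 2 := by
  have hinner : ∑ x, f x * (β * f x) = β * ∑ x, f x ^ 2 := by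
    rw [mul_sum]
    exact sum_congr rfl fun _ _ => by ring
  simp only [sum_mul_plusEnergy, hp1, hf, hinner]
  ring

theorem mul_sum_sq_le_sum_mul_plusEnergy [DecidableEq G] {p f : G → ℝ} {βmin : ℝ}
    (hp1 : ∑ g, p g = 1) (hp : ∀ g, p g⁻¹ = p g) (hβmin : ∀ β, IsEig p β → βmin ≤ β)
    (hf : f ≠ 0) :
    2 * (1 + βmin) * ∑ x, f x ^ 2 ≤ ∑ y, p y * plusEnergy f y := by
  obtain ⟨c, hc, hle⟩ := exists_isEig_mul_sum_sq_le hp hf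
  have hβc : βmin * ∑ x, f x ^ 2 ≤ c * ∑ x, f x ^ 2 :=
    mul_le_mul_of_nonneg_right (hβmin c hc) (sum_nonneg fun _ _ => sq_nonneg _)
  rw [sum_mul_plusEnergy, hp1]
  linarith

end MarkovOperator

section Flow

variable {G : Type*} [DecidableEq G]

def flowLoad (D : Finset (List G)) (η : List G → ℝ) (s : G) : ℝ :=
  ∑ δ ∈ D, (δ.length : ℝ) * (δ.count s : ℝ) * η δ

theorem flowLoad_nonneg {D : Finset (List G)} {η : List G → ℝ} (hη0 : ∀ δ, 0 ≤ η δ) (s : G) :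
    0 ≤ flowLoad D η s :=
  sum_nonneg fun δ _ => mul_nonneg (by positivity) (hη0 δ)

variable [Group G]

theorem sum_flow_le_sum_flowLoad {S : Finset G} {D : Finset (List G)} {η : List G → ℝ}
    (hη0 : ∀ δ, 0 ≤ η δ) (hsteps : ∀ δ ∈ D, ∀ s ∈ δ, s ∈ S) {E : G → ℝ}
    (hpath : ∀ δ ∈ D, E δ.prod ≤ δ.length * (δ.map E).sum) :
    ∑ δ ∈ D, η δ * E δ.prod ≤ ∑ s ∈ S, flowLoad D η s * E s :=
  calc ∑ δ ∈ D, η δ * E δ.prod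
      ≤ ∑ δ ∈ D, η δ * (δ.length * ∑ s ∈ S, (δ.count s : ℝ) * E s) :=
        sum_le_sum fun δ hδ => mul_le_mul_of_nonneg_left
          ((hpath δ hδ).trans_eq (by rw [List.sum_map_eq_sum_count_mul (hsteps δ hδ)])) (hη0 δ)
    _ = ∑ s ∈ S, flowLoad D η s * E s := by
        simp only [flowLoad, mul_sum, sum_mul]
        rw [sum_comm]
        exact sum_congr rfl fun _ _ => sum_congr rfl fun _ _ => by ring

variable [Fintype G]

theorem sum_mul_eq_sum_flow {D : Finset (List G)} {η : List G → ℝ} {qt : G → ℝ}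
    (hflow : ∀ y : G, ∑ δ ∈ D.filter (fun δ => δ.prod = y), η δ = qt y) (E : G → ℝ) :
    ∑ y, qt y * E y = ∑ δ ∈ D, η δ * E δ.prod := by
  rw [← sum_fiberwise D List.prod]
  refine sum_congr rfl fun y _ => ?_
  rw [← hflow y, sum_mul]
  exact sum_congr rfl fun δ hδ => by rw [(mem_filter.1 hδ).2]

theorem sum_mul_le_of_flow {q qt : G → ℝ} (hq0 : ∀ g, 0 ≤ q g) {S : Finset G}
    {D : Finset (List G)} {η : List G → ℝ} (hη0 : ∀ δ, 0 ≤ η δ)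
    (hsteps : ∀ δ ∈ D, ∀ s ∈ δ, s ∈ S)
    (hflow : ∀ y : G, ∑ δ ∈ D.filter (fun δ => δ.prod = y), η δ = qt y)
    {A : ℝ} (hA0 : 0 ≤ A) (hload : ∀ s ∈ S, flowLoad D η s ≤ A * q s)
    {E : G → ℝ} (hE0 : ∀ y, 0 ≤ E y) (hpath : ∀ δ ∈ D, E δ.prod ≤ δ.length * (δ.map E).sum) :
    ∑ y, qt y * E y ≤ A * ∑ y, q y * E y :=
  calc ∑ y, qt y * E y
      = ∑ δ ∈ D, η δ * E δ.prod := sum_mul_eq_sum_flow hflow E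
    _ ≤ ∑ s ∈ S, flowLoad D η s * E s := sum_flow_le_sum_flowLoad hη0 hsteps hpath
    _ ≤ ∑ s ∈ S, A * (q s * E s) :=
        sum_le_sum fun s hs => by
          rw [← mul_assoc]
          exact mul_le_mul_of_nonneg_right (hload s hs) (hE0 s)
    _ ≤ ∑ y, A * (q y * E y) :=
        sum_le_sum_of_subset_of_nonneg (subset_univ S) fun y _ _ =>
          mul_nonneg hA0 (mul_nonneg (hq0 y) (hE0 y))
    _ = A * ∑ y, q y * E y := (mul_sum _ _ _).symm

end Flow

theorem stmt8_general {G : Type*} [Fintype G] [Group G] [DecidableEq G]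
    (q qt : G → ℝ)
    (hq0 : ∀ g, 0 ≤ q g) (hq1 : ∑ g, q g = 1)
    (hqt1 : ∑ g, qt g = 1) (hqtsym : ∀ g, qt g⁻¹ = qt g)
    (S : Finset G) (hS : S.Nonempty)
    (hSsupp : ∀ s ∈ S, 0 < q s)
    (D : Finset (List G)) (η : List G → ℝ)
    (hη0 : ∀ δ, 0 ≤ η δ)
    (hodd : ∀ δ ∈ D, Odd δ.length)
    (hsteps : ∀ δ ∈ D, ∀ s ∈ δ, s ∈ S)
    (hflow : ∀ y : G, ∑ δ ∈ D.filter (fun δ => δ.prod = y), η δ = qt y)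
    (A : ℝ)
    (hA : A = S.sup' hS
      (fun s => (1 / q s) * ∑ δ ∈ D, (δ.length : ℝ) * (δ.count s : ℝ) * η δ))
    (βtmin : ℝ) (hβtle : ∀ β', IsEig qt β' → βtmin ≤ β')
    (β : ℝ) (hβ : IsEig q β) :
    -1 + (1 + βtmin) / A ≤ β := by
  obtain ⟨f, hf, hfeig⟩ := hβ
  have hle_A : ∀ s ∈ S, 1 / q s * flowLoad D η s ≤ A := fun s hs => by
    rw [hA]
    exact le_sup' (fun s => 1 / q s * flowLoad D η s) hs
  have hA0 : 0 ≤ A := by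
    obtain ⟨s, hs⟩ := hS
    exact (mul_nonneg (one_div_nonneg.2 (hq0 s)) (flowLoad_nonneg hη0 s)).trans (hle_A s hs)
  have hload : ∀ s ∈ S, flowLoad D η s ≤ A * q s := fun s hs => by
    have := hle_A s hs
    rwa [one_div, inv_mul_le_iff₀ (hSsupp s hs), mul_comm] at this
  have hcomp := sum_mul_le_of_flow hq0 hη0 hsteps hflow hA0 hload (plusEnergy_nonneg f)
    fun δ hδ => plusEnergy_prod_le f (hodd δ hδ)
  have hqE := sum_mul_plusEnergy_of_eigen hq1 hfeig
  have hqtE := mul_sum_sq_le_sum_mul_plusEnergy hqt1 hqtsym hβtle hf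
  obtain ⟨x, hx⟩ := Function.ne_iff.1 hf
  have hN : 0 < ∑ x, f x ^ 2 :=
    sum_pos' (fun _ _ => sq_nonneg _) ⟨x, mem_univ x, pow_two_pos_of_ne_zero hx⟩
  -- needed when `A = 0`, where `(1 + βtmin) / A = 0`
  have hβ1 : 0 ≤ 1 + β := by
    have := sum_nonneg fun y (_ : y ∈ univ) => mul_nonneg (hq0 y) (plusEnergy_nonneg f y)
    nlinarith
  have hkey : 1 + βtmin ≤ (1 + β) * A := by nlinarith
  linarith [div_le_of_le_mul₀ hA0 hβ1 hkey]

/-- Smallest eigenvalue via odd flows: given symmetric probability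
measures `q̃, q` on a finite group `G`, a symmetric set `S ⊆ supp(q)`, and a
`(q̃,q)`-odd flow `η` (supported on the finite set `D` of odd-length paths from the
identity with steps in `S`, routing mass `q̃(y)` to each `y`), every eigenvalue `β` of
`q` satisfies `β ≥ −1 + (1 + β̃_min)/A(η)` where `β̃_min` is the least eigenvalue of
`q̃` and `A(η) = max_{s∈S} (1/q(s)) Σ_δ |δ| N(s,δ) η(δ)`. -/
theorem stmt8 {G : Type*} [Fintype G] [Group G] [DecidableEq G]
    (q qt : G → ℝ)
    (hq0 : ∀ g, 0 ≤ q g) (hq1 : ∑ g, q g = 1) (hqsym : ∀ g, q g⁻¹ = q g)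
    (hqt0 : ∀ g, 0 ≤ qt g) (hqt1 : ∑ g, qt g = 1) (hqtsym : ∀ g, qt g⁻¹ = qt g)
    (S : Finset G) (hS : S.Nonempty)
    (hSsupp : ∀ s ∈ S, 0 < q s) (hSsym : ∀ s ∈ S, s⁻¹ ∈ S)
    (D : Finset (List G)) (η : List G → ℝ)
    (hη0 : ∀ δ, 0 ≤ η δ) (hηD : ∀ δ ∉ D, η δ = 0)
    (hodd : ∀ δ ∈ D, Odd δ.length)
    (hsteps : ∀ δ ∈ D, ∀ s ∈ δ, s ∈ S)
    (hflow : ∀ y : G, ∑ δ ∈ D.filter (fun δ => δ.prod = y), η δ = qt y)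
    (A : ℝ)
    (hA : A = S.sup' hS
      (fun s => (1 / q s) * ∑ δ ∈ D, (δ.length : ℝ) * (δ.count s : ℝ) * η δ))
    (βtmin : ℝ) (hβtmin : IsEig qt βtmin) (hβtle : ∀ β', IsEig qt β' → βtmin ≤ β')
    (β : ℝ) (hβ : IsEig q β) :
    -1 + (1 + βtmin) / A ≤ β :=
  stmt8_general q qt hq0 hq1 hqt1 hqtsym S hS hSsupp D η hη0 hodd hsteps hflow A hA βtmin hβtle β hβ
end

section
/- Dirichlet form comparison via flows: Let q̃, q be symmetric probability measures on a finite group G, S ⊆ supp(q) a symmetric generating set, and η a (q̃,q)-flow (a nonnegative function on paths from the identity in the Cayley graph (G,S) such that the total flow to each y equals q̃(y)). Then E_{q̃}(f,f) ≤ A(η)·E_q(f,f) for all f : G → ℝ, where A(η) = max_{s∈S} (1/q(s)) Σ_δ |δ|·N(s,δ)·η(δ). -/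
/-- The Dirichlet form `E_q(f,f) = (1/(2|G|)) Σ_{x,y} |f(xy) − f(x)|² q(y)`. -/
noncomputable def dirichletForm {G : Type*} [Fintype G] [Group G] (q : G → ℝ) (f : G → ℝ) : ℝ :=
  (1 / (2 * (Fintype.card G : ℝ))) * ∑ x, ∑ y, |f (x * y) - f x| ^ 2 * q y

lemma key_tele {G : Type*} [Fintype G] [Group G] (f : G → ℝ) :
    ∀ δ : List G, ∑ x, (f (x * δ.prod) - f x) ^ 2 ≤
      (δ.length : ℝ) * (δ.map (fun s => ∑ x, (f (x * s) - f x) ^ 2)).sum := by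
  intro δ
  induction δ with
  | nil => simp
  | cons s t ih =>
    have reidx : ∑ x : G, (f (x * s * t.prod) - f (x * s)) ^ 2
        = ∑ x : G, (f (x * t.prod) - f x) ^ 2 := by
      apply Fintype.sum_equiv (Equiv.mulRight s)
      intro x
      simp [mul_assoc]
    rcases eq_or_ne t [] with rfl | ht
    · simp
    · have hB0 : 0 ≤ (t.map (fun s => ∑ x : G, (f (x * s) - f x) ^ 2)).sum := by
        apply List.sum_nonneg
        intro y hy
        simp only [List.mem_map] at hy
        obtain ⟨u, -, rfl⟩ := hy
        exact Finset.sum_nonneg fun x _ => sq_nonneg _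
      have hn : (1:ℝ) ≤ (t.length : ℝ) := by
        exact_mod_cast List.length_pos_iff.mpr ht
      have hn0 : (0:ℝ) < (t.length : ℝ) := lt_of_lt_of_le one_pos hn
      have h1 : ∑ x : G, (f (x * (s * t.prod)) - f x) ^ 2
          ≤ ∑ x : G, (((t.length:ℝ)+1) * (f (x*s) - f x)^2
              + (1 + 1/(t.length:ℝ)) * (f (x*s*t.prod) - f (x*s))^2) := by
        apply Finset.sum_le_sum
        intro x _
        have hx : x * (s * t.prod) = x * s * t.prod := (mul_assoc _ _ _).symm
        rw [hx]
        set n : ℝ := (t.length : ℝ)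
        set a := f (x*s) - f x with ha
        set b := f (x*s*t.prod) - f (x*s) with hb
        have hab : f (x*s*t.prod) - f x = b + a := by rw [ha, hb]; ring
        rw [hab]
        have key2 : 2 * (a*b) * n ≤ n^2 * a^2 + b^2 := by nlinarith [sq_nonneg (n*a - b)]
        have h2 : (b+a)^2 * n ≤ ((n+1)*a^2 + (1+1/n)*b^2) * n := by
          have hexp : ((n+1)*a^2 + (1+1/n)*b^2) * n = (n+1)*(a^2*n) + b^2*n + b^2 := by
            field_simp; ring
          rw [hexp]
          nlinarith [sq_nonneg (n*a - b)]
        exact le_of_mul_le_mul_right h2 hn0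
      have h3 : ∑ x : G, (((t.length:ℝ)+1) * (f (x*s) - f x)^2
              + (1 + 1/(t.length:ℝ)) * (f (x*s*t.prod) - f (x*s))^2)
          = ((t.length:ℝ)+1) * (∑ x : G, (f (x*s) - f x)^2)
            + (1 + 1/(t.length:ℝ)) * (∑ x : G, (f (x*t.prod) - f x)^2) := by
        rw [Finset.sum_add_distrib, ← Finset.mul_sum, ← Finset.mul_sum, reidx]
      have h4 : (1 + 1/(t.length:ℝ)) * (∑ x : G, (f (x*t.prod) - f x)^2)
          ≤ ((t.length:ℝ)+1) * (t.map (fun s => ∑ x : G, (f (x * s) - f x) ^ 2)).sum := by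
        have hpos : (0:ℝ) < 1 + 1/(t.length:ℝ) := by positivity
        calc (1 + 1/(t.length:ℝ)) * (∑ x : G, (f (x*t.prod) - f x)^2)
            ≤ (1 + 1/(t.length:ℝ)) * ((t.length:ℝ) * (t.map (fun s => ∑ x : G, (f (x * s) - f x) ^ 2)).sum) :=
              mul_le_mul_of_nonneg_left ih hpos.le
          _ = ((t.length:ℝ)+1) * (t.map (fun s => ∑ x : G, (f (x * s) - f x) ^ 2)).sum := by
              field_simp
      calc ∑ x : G, (f (x * (s :: t).prod) - f x) ^ 2
          = ∑ x : G, (f (x * (s * t.prod)) - f x) ^ 2 := by simp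
        _ ≤ _ := h1
        _ = _ := h3
        _ ≤ ((t.length:ℝ)+1) * (∑ x : G, (f (x*s) - f x)^2)
              + ((t.length:ℝ)+1) * (t.map (fun s => ∑ x : G, (f (x * s) - f x) ^ 2)).sum := by
            have := h4
            linarith
        _ = (((s::t).length : ℝ)) * ((s::t).map (fun s => ∑ x : G, (f (x * s) - f x) ^ 2)).sum := by
            simp only [List.length_cons, List.map_cons, List.sum_cons]
            push_cast
            ring


/-- Dirichlet form comparison via flows: given symmetric probability
measures `q̃, q` on a finite group `G`, a symmetric generating set `S ⊆ supp(q)`, and a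
`(q̃,q)`-flow `η` (supported on a finite set `D` of paths from the identity with steps
in `S`, routing total mass `q̃(y)` to each `y`), one has
`E_{q̃}(f,f) ≤ A(η)·E_q(f,f)` with `A(η) = max_{s∈S} (1/q(s)) Σ_δ |δ| N(s,δ) η(δ)`. -/
theorem stmt10 {G : Type*} [Fintype G] [Group G] [DecidableEq G]
    (q qt : G → ℝ)
    (hq0 : ∀ g, 0 ≤ q g) (hq1 : ∑ g, q g = 1) (hqsym : ∀ g, q g⁻¹ = q g)
    (hqt0 : ∀ g, 0 ≤ qt g) (hqt1 : ∑ g, qt g = 1) (hqtsym : ∀ g, qt g⁻¹ = qt g)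
    (S : Finset G) (hS : S.Nonempty)
    (hSsupp : ∀ s ∈ S, 0 < q s) (hSsym : ∀ s ∈ S, s⁻¹ ∈ S)
    (hSgen : Subgroup.closure (S : Set G) = ⊤)
    (D : Finset (List G)) (η : List G → ℝ)
    (hη0 : ∀ δ, 0 ≤ η δ) (hηD : ∀ δ ∉ D, η δ = 0)
    (hsteps : ∀ δ ∈ D, ∀ s ∈ δ, s ∈ S)
    (hflow : ∀ y : G, ∑ δ ∈ D.filter (fun δ => δ.prod = y), η δ = qt y)
    (A : ℝ)
    (hA : A = S.sup' hS
      (fun s => (1 / q s) * ∑ δ ∈ D, (δ.length : ℝ) * (δ.count s : ℝ) * η δ)) :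
    ∀ f : G → ℝ, dirichletForm qt f ≤ A * dirichletForm q f := by
  intro f
  set T : G → ℝ := fun s => ∑ x, (f (x * s) - f x) ^ 2 with hTdef
  have hT0 : ∀ s, 0 ≤ T s := fun s => Finset.sum_nonneg fun x _ => sq_nonneg _
  have hA0 : 0 ≤ A := by
    obtain ⟨s0, hs0⟩ := hS
    rw [hA]
    refine le_trans ?_ (Finset.le_sup' _ hs0)
    refine mul_nonneg (one_div_nonneg.mpr (hq0 s0)) (Finset.sum_nonneg fun δ _ => ?_)
    exact mul_nonneg (mul_nonneg (by positivity) (by positivity)) (hη0 δ)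
  have hform : ∀ p : G → ℝ, dirichletForm p f
      = (1 / (2 * (Fintype.card G : ℝ))) * ∑ y : G, p y * T y := by
    intro p
    unfold dirichletForm
    congr 1
    rw [Finset.sum_comm]
    simp only [hTdef]
    refine Finset.sum_congr rfl fun y _ => ?_
    rw [Finset.mul_sum]
    exact Finset.sum_congr rfl fun x _ => by rw [sq_abs]; ring
  have step1 : ∑ δ ∈ D, η δ * T δ.prod = ∑ y : G, qt y * T y := by
    rw [← Finset.sum_fiberwise D (fun δ => δ.prod) (fun δ => η δ * T δ.prod)]
    refine Finset.sum_congr rfl fun y _ => ?_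
    rw [← hflow y, Finset.sum_mul]
    refine Finset.sum_congr rfl fun δ hδ => ?_
    rw [(Finset.mem_filter.mp hδ).2]
  have step2 : ∀ δ ∈ D, T δ.prod ≤ (δ.length : ℝ) * ∑ s ∈ S, (δ.count s : ℝ) * T s := by
    intro δ hδ
    refine le_trans (key_tele f δ) ?_
    have hmap : (δ.map T).sum = ∑ s ∈ S, (δ.count s : ℝ) * T s := by
      rw [Finset.sum_list_map_count]
      simp only [nsmul_eq_mul]
      refine Finset.sum_subset (fun s hs => hsteps δ hδ s (List.mem_toFinset.mp hs)) ?_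
      · intro s _ hs
        rw [List.count_eq_zero_of_not_mem (fun h => hs (List.mem_toFinset.mpr h))]
        simp
    rw [hTdef] at hmap ⊢
    rw [hmap]
  have step3 : ∑ δ ∈ D, η δ * T δ.prod
      ≤ ∑ s ∈ S, (∑ δ ∈ D, (δ.length : ℝ) * (δ.count s : ℝ) * η δ) * T s := by
    calc ∑ δ ∈ D, η δ * T δ.prod
        ≤ ∑ δ ∈ D, η δ * ((δ.length : ℝ) * ∑ s ∈ S, (δ.count s : ℝ) * T s) :=
          Finset.sum_le_sum fun δ hδ => mul_le_mul_of_nonneg_left (step2 δ hδ) (hη0 δ)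
      _ = ∑ s ∈ S, (∑ δ ∈ D, (δ.length : ℝ) * (δ.count s : ℝ) * η δ) * T s := by
          simp_rw [Finset.mul_sum, Finset.sum_mul]
          rw [Finset.sum_comm]
          exact Finset.sum_congr rfl fun s _ => Finset.sum_congr rfl fun δ _ => by ring
  have step4 : ∀ s ∈ S, ∑ δ ∈ D, (δ.length : ℝ) * (δ.count s : ℝ) * η δ ≤ A * q s := by
    intro s hs
    have hqs := hSsupp s hs
    have hle : (1 / q s) * ∑ δ ∈ D, (δ.length : ℝ) * (δ.count s : ℝ) * η δ ≤ A := by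
      rw [hA]
      exact Finset.le_sup' (fun s => (1 / q s) * ∑ δ ∈ D, (δ.length : ℝ) * (δ.count s : ℝ) * η δ) hs
    calc ∑ δ ∈ D, (δ.length : ℝ) * (δ.count s : ℝ) * η δ
        = q s * ((1 / q s) * ∑ δ ∈ D, (δ.length : ℝ) * (δ.count s : ℝ) * η δ) := by
          field_simp
      _ ≤ q s * A := mul_le_mul_of_nonneg_left hle hqs.le
      _ = A * q s := mul_comm _ _
  have step5 : ∑ s ∈ S, (∑ δ ∈ D, (δ.length : ℝ) * (δ.count s : ℝ) * η δ) * T s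
      ≤ A * ∑ y : G, q y * T y := by
    calc ∑ s ∈ S, (∑ δ ∈ D, (δ.length : ℝ) * (δ.count s : ℝ) * η δ) * T s
        ≤ ∑ s ∈ S, A * (q s * T s) :=
          Finset.sum_le_sum fun s hs => by
            have := mul_le_mul_of_nonneg_right (step4 s hs) (hT0 s)
            linarith [this]
      _ ≤ ∑ y : G, A * (q y * T y) :=
          Finset.sum_le_sum_of_subset_of_nonneg (Finset.subset_univ S)
            (fun y _ _ => mul_nonneg hA0 (mul_nonneg (hq0 y) (hT0 y)))
      _ = A * ∑ y : G, q y * T y := by rw [Finset.mul_sum]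
  have hX : ∑ y : G, qt y * T y ≤ A * ∑ y : G, q y * T y := by
    rw [← step1]; exact step3.trans step5
  rw [hform qt, hform q]
  have hc0 : (0:ℝ) ≤ 1 / (2 * (Fintype.card G : ℝ)) := by positivity
  calc (1 / (2 * (Fintype.card G : ℝ))) * ∑ y : G, qt y * T y
      ≤ (1 / (2 * (Fintype.card G : ℝ))) * (A * ∑ y : G, q y * T y) :=
        mul_le_mul_of_nonneg_left hX hc0
    _ = A * ((1 / (2 * (Fintype.card G : ℝ))) * ∑ y : G, q y * T y) := by ring
end

section
/- Lower bound for flow comparison constants: For any (q̃,q)-flow η on the Cayley graph (G,S), the constant A(η) = max_{s∈S} (1/q(s)) Σ_δ |δ|·N(s,δ)·η(δ) satisfies A(η) ≥ Σ_{g∈G} d_S(e,g)²·q̃(g), where d_S is the word distance in (G,S). In particular, for any X ⊆ G, A(η) ≥ d_S(e,X)²·q̃(X). -/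
/-- Word distance from the identity to `g` in the Cayley graph `(G,S)`: the least
length of a word in `S` whose product is `g`. -/
noncomputable def wordDist {G : Type*} [Group G] (S : Finset G) (g : G) : ℕ :=
  sInf {m : ℕ | ∃ δ : List G, (∀ s ∈ δ, s ∈ S) ∧ δ.prod = g ∧ δ.length = m}

/-- Lower bound for flow comparison constants: for any `(q̃,q)`-flow
`η` on the Cayley graph `(G,S)`, the constant
`A(η) = max_{s∈S} (1/q(s)) Σ_δ |δ| N(s,δ) η(δ)` satisfies
`A(η) ≥ Σ_g d_S(e,g)² q̃(g)`; in particular `A(η) ≥ d_S(e,X)² q̃(X)` for `X ⊆ G`. -/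
theorem stmt11 {G : Type*} [Fintype G] [Group G] [DecidableEq G]
    (q qt : G → ℝ)
    (hq0 : ∀ g, 0 ≤ q g) (hq1 : ∑ g, q g = 1) (hqsym : ∀ g, q g⁻¹ = q g)
    (hqt0 : ∀ g, 0 ≤ qt g) (hqt1 : ∑ g, qt g = 1)
    (S : Finset G) (hS : S.Nonempty)
    (hSsupp : ∀ s ∈ S, 0 < q s) (hSsym : ∀ s ∈ S, s⁻¹ ∈ S)
    (hSgen : Subgroup.closure (S : Set G) = ⊤)
    (D : Finset (List G)) (η : List G → ℝ)
    (hη0 : ∀ δ, 0 ≤ η δ) (hηD : ∀ δ ∉ D, η δ = 0)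
    (hsteps : ∀ δ ∈ D, ∀ s ∈ δ, s ∈ S)
    (hflow : ∀ y : G, ∑ δ ∈ D.filter (fun δ => δ.prod = y), η δ = qt y)
    (A : ℝ)
    (hA : A = S.sup' hS
      (fun s => (1 / q s) * ∑ δ ∈ D, (δ.length : ℝ) * (δ.count s : ℝ) * η δ)) :
    (∑ g, (wordDist S g : ℝ) ^ 2 * qt g ≤ A) ∧
    ∀ (X : Finset G) (d : ℕ), (∀ x ∈ X, d ≤ wordDist S x) →
      (d : ℝ) ^ 2 * ∑ x ∈ X, qt x ≤ A := by

  -- Auxiliary: word distance is at most the length of any representing word.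
  have hwd_le : ∀ δ ∈ D, wordDist S δ.prod ≤ δ.length := fun δ hδ =>
    Nat.sInf_le ⟨δ, hsteps δ hδ, rfl, rfl⟩
  -- Auxiliary: counting letters over S gives the length.
  have hcount : ∀ δ ∈ D, ∑ s ∈ S, (δ.count s : ℝ) = (δ.length : ℝ) := by
    intro δ hδ
    have h : ∑ s ∈ S, δ.count s = δ.length := by
      have hbase : ∑ s ∈ δ.toFinset, δ.count s = δ.length := by
        simpa using Multiset.toFinset_sum_count_eq (δ : Multiset G)
      rw [← hbase]
      exact (Finset.sum_subset
        (fun x hx => hsteps δ hδ x (List.mem_toFinset.1 hx))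
        (fun x _ hx => List.count_eq_zero_of_not_mem
          (fun hm => hx (List.mem_toFinset.2 hm)))).symm
    exact_mod_cast congrArg (Nat.cast : ℕ → ℝ) h
  have hA0 : 0 ≤ A := by
    obtain ⟨s₀, hs₀⟩ := hS
    have h1 : (1 / q s₀) * ∑ δ ∈ D, (δ.length : ℝ) * (δ.count s₀ : ℝ) * η δ ≤ A := by
      rw [hA]
      exact Finset.le_sup' (fun s => (1 / q s) * ∑ δ ∈ D, (δ.length : ℝ) * (δ.count s : ℝ) * η δ) hs₀
    refine le_trans ?_ h1
    apply mul_nonneg (one_div_nonneg.2 (hSsupp s₀ hs₀).le)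
    exact Finset.sum_nonneg fun δ _ => mul_nonneg (mul_nonneg (by positivity) (by positivity)) (hη0 δ)
  have key : ∑ g, (wordDist S g : ℝ) ^ 2 * qt g ≤ A := by
    have h1 : ∑ g, (wordDist S g : ℝ) ^ 2 * qt g
        = ∑ δ ∈ D, (wordDist S δ.prod : ℝ) ^ 2 * η δ := by
      rw [← Finset.sum_fiberwise D (fun δ => δ.prod)
        (fun δ => (wordDist S δ.prod : ℝ) ^ 2 * η δ)]
      refine Finset.sum_congr rfl fun g _ => ?_
      rw [← hflow g, Finset.mul_sum]
      refine Finset.sum_congr rfl fun δ hδ => ?_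
      rw [(Finset.mem_filter.1 hδ).2]
    have h2 : ∑ δ ∈ D, (wordDist S δ.prod : ℝ) ^ 2 * η δ
        ≤ ∑ δ ∈ D, (δ.length : ℝ) ^ 2 * η δ := by
      refine Finset.sum_le_sum fun δ hδ => ?_
      refine mul_le_mul_of_nonneg_right ?_ (hη0 δ)
      have := hwd_le δ hδ
      have hc : (wordDist S δ.prod : ℝ) ≤ (δ.length : ℝ) := by exact_mod_cast this
      exact pow_le_pow_left₀ (by positivity) hc 2
    have h3 : ∑ δ ∈ D, (δ.length : ℝ) ^ 2 * η δ
        = ∑ s ∈ S, ∑ δ ∈ D, (δ.length : ℝ) * (δ.count s : ℝ) * η δ := by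
      rw [Finset.sum_comm]
      refine Finset.sum_congr rfl fun δ hδ => ?_
      rw [← Finset.sum_mul, ← Finset.mul_sum, hcount δ hδ]
      ring
    have h4 : ∑ s ∈ S, ∑ δ ∈ D, (δ.length : ℝ) * (δ.count s : ℝ) * η δ ≤ A := by
      have heq : ∀ s ∈ S, ∑ δ ∈ D, (δ.length : ℝ) * (δ.count s : ℝ) * η δ
          = q s * ((1 / q s) * ∑ δ ∈ D, (δ.length : ℝ) * (δ.count s : ℝ) * η δ) := by
        intro s hs
        have : q s ≠ 0 := (hSsupp s hs).ne'
        field_simp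
      calc ∑ s ∈ S, ∑ δ ∈ D, (δ.length : ℝ) * (δ.count s : ℝ) * η δ
          = ∑ s ∈ S, q s * ((1 / q s) * ∑ δ ∈ D, (δ.length : ℝ) * (δ.count s : ℝ) * η δ) :=
            Finset.sum_congr rfl heq
        _ ≤ ∑ s ∈ S, q s * A := by
            refine Finset.sum_le_sum fun s hs => ?_
            refine mul_le_mul_of_nonneg_left ?_ (hq0 s)
            rw [hA]
            exact Finset.le_sup' (fun s => (1 / q s) * ∑ δ ∈ D, (δ.length : ℝ) * (δ.count s : ℝ) * η δ) hs
        _ = (∑ s ∈ S, q s) * A := by rw [Finset.sum_mul]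
        _ ≤ 1 * A := by
            refine mul_le_mul_of_nonneg_right ?_ hA0
            rw [← hq1]
            exact Finset.sum_le_sum_of_subset_of_nonneg (Finset.subset_univ S)
              (fun g _ _ => hq0 g)
        _ = A := one_mul A
    calc ∑ g, (wordDist S g : ℝ) ^ 2 * qt g
        = ∑ δ ∈ D, (wordDist S δ.prod : ℝ) ^ 2 * η δ := h1
      _ ≤ ∑ δ ∈ D, (δ.length : ℝ) ^ 2 * η δ := h2
      _ = ∑ s ∈ S, ∑ δ ∈ D, (δ.length : ℝ) * (δ.count s : ℝ) * η δ := h3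
      _ ≤ A := h4
  refine ⟨key, fun X d hX => ?_⟩
  calc (d : ℝ) ^ 2 * ∑ x ∈ X, qt x
      = ∑ x ∈ X, (d : ℝ) ^ 2 * qt x := Finset.mul_sum _ _ _
    _ ≤ ∑ x ∈ X, (wordDist S x : ℝ) ^ 2 * qt x := by
        refine Finset.sum_le_sum fun x hx => ?_
        refine mul_le_mul_of_nonneg_right ?_ (hqt0 x)
        have : (d : ℝ) ≤ (wordDist S x : ℝ) := by exact_mod_cast hX x hx
        exact pow_le_pow_left₀ (by positivity) this 2
    _ ≤ ∑ g, (wordDist S g : ℝ) ^ 2 * qt g :=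
        Finset.sum_le_sum_of_subset_of_nonneg (Finset.subset_univ X)
          (fun g _ _ => mul_nonneg (by positivity) (hqt0 g))
    _ ≤ A := key
end

section
/- Any cycle σ_l = (1,2,…,l) in S_n can be written using only σ_n, σ_n^{−1}, and the transposition τ = (1,n) as σ_l = σ_n · (σ_n^{−1}·τ)^{n−l} · σ_n^{n−l}, a word of length 3(n−l)+1 in these generators. Consequently, the word distance of σ_l from the identity in the Cayley graph of S_n with generating set {σ_n, σ_n^{−1}, τ} is at most 3(n−l)+1. -/
/-!
In `Fin (N + 1)` (indices shifted down by one), removing the last point of the cycle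
`cycleRange i.succ` is multiplication by the adjacent transposition `swap i.castSucc i.succ`,
and that transposition is the conjugate of `τ = swap 0 (last N)` by `finRotate (N + 1) ^ (N - i)`.
Descending from `σ_n = finRotate (N + 1)`, the product of these conjugates telescopes:
`∏_{j=1}^{k} σ_n^{-j} τ σ_n^j = (σ_n⁻¹ τ)^k σ_n^k`.
-/

open Equiv

theorem inv_mul_pow_succ_mul_pow_succ {G : Type*} [Group G] (a t : G) (k : ℕ) :
    (a⁻¹ * t) ^ (k + 1) * a ^ (k + 1) =
      (a⁻¹ * t) ^ k * a ^ k * ((a ^ (k + 1))⁻¹ * t * a ^ (k + 1)) := by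
  simp only [pow_succ (a⁻¹ * t), pow_succ' a, mul_inv_rev, mul_assoc, mul_inv_cancel_left]

namespace Fin

theorem val_finRotate_pow_apply (N k : ℕ) (x : Fin (N + 1)) :
    ((finRotate (N + 1) ^ k) x : ℕ) = (x + k) % (N + 1) := by
  induction k with
  | zero => simp [Nat.mod_eq_of_lt x.isLt]
  | succ k ih =>
    rw [pow_succ', Perm.mul_apply, finRotate_apply, val_add, ih, val_one',
      Nat.add_mod_mod, Nat.mod_add_mod, add_assoc]

theorem cycleRange_succ_mul_swap {N : ℕ} (i : Fin N) :
    cycleRange i.succ * swap i.castSucc i.succ = cycleRange i.castSucc := by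
  ext j
  simp only [Perm.mul_apply, cycleRange_apply, swap_apply_def]
  split_ifs <;> simp_all [Fin.ext_iff, lt_def, val_add_one] <;> omega

theorem inv_finRotate_pow_mul_swap_mul_finRotate_pow {N : ℕ} (i : Fin N) :
    (finRotate (N + 1) ^ (N - i : ℕ))⁻¹ * swap 0 (last N) * finRotate (N + 1) ^ (N - i : ℕ) =
      swap i.castSucc i.succ := by
  set f := finRotate (N + 1) ^ (N - i : ℕ)
  have h_castSucc : f i.castSucc = last N := by
    ext; rw [val_finRotate_pow_apply]; simp
  have h_succ : f i.succ = 0 := by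
    ext
    rw [val_finRotate_pow_apply, val_succ, show (i : ℕ) + 1 + (N - i) = N + 1 by omega,
      Nat.mod_self, val_zero]
  rw [swap_comm, ← h_castSucc, ← h_succ, swap_apply_apply]
  group

theorem finRotate_mul_inv_mul_swap_pow_mul_finRotate_pow {N : ℕ} (j : Fin (N + 1)) :
    finRotate (N + 1) * ((finRotate (N + 1))⁻¹ * swap 0 (last N)) ^ (N - j : ℕ) *
      finRotate (N + 1) ^ (N - j : ℕ) = cycleRange j := by
  induction j using Fin.reverseInduction with
  | last => simp
  | cast i ih =>
    have h_exp : N - (i.castSucc : ℕ) = N - (i.succ : ℕ) + 1 := by simp; omega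
    rw [h_exp, mul_assoc, inv_mul_pow_succ_mul_pow_succ, ← mul_assoc, ← mul_assoc (finRotate _),
      ih, ← h_exp, val_castSucc, inv_finRotate_pow_mul_swap_mul_finRotate_pow,
      cycleRange_succ_mul_swap]

end Fin

theorem exists_list_prod_eq_mul_inv_mul_pow_mul_pow {G : Type*} [Group G] (a t : G) (k : ℕ) :
    ∃ δ : List G, (∀ s ∈ δ, s = a ∨ s = a⁻¹ ∨ s = t) ∧
      δ.prod = a * (a⁻¹ * t) ^ k * a ^ k ∧ δ.length = 3 * k + 1 := by
  refine ⟨a :: (List.replicate k [a⁻¹, t]).flatten ++ List.replicate k a, ?_, ?_, ?_⟩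
  · simp only [List.cons_append, List.mem_cons, List.mem_append, List.mem_flatten,
      List.mem_replicate]
    aesop
  · simp [List.prod_flatten, List.prod_replicate, mul_assoc]
  · simp [List.length_flatten]
    ring

/-- in `S_n` (permutations of `Fin n`), the cycle `σ_l = (1,2,…,l)`
satisfies `σ_l = σ_n · (σ_n⁻¹ · τ)^{n−l} · σ_n^{n−l}` where `τ = (1,n)`, a word of
length `3(n−l)+1` in `{σ_n, σ_n⁻¹, τ}`; hence the word distance of `σ_l` from the
identity with respect to this generating set is at most `3(n−l)+1`. -/
theorem stmt18 (n : ℕ) (l : ℕ) (hl1 : 1 ≤ l) (hln : l ≤ n)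
    (σ : ℕ → Equiv.Perm (Fin n))
    (hσ : ∀ m (h1 : 1 ≤ m) (h2 : m ≤ n), σ m = Fin.cycleRange ⟨m - 1, by omega⟩)
    (τ : Equiv.Perm (Fin n))
    (hτ : τ = Equiv.swap ⟨0, by omega⟩ ⟨n - 1, by omega⟩) :
    σ l = σ n * ((σ n)⁻¹ * τ) ^ (n - l) * (σ n) ^ (n - l) ∧
    sInf {m : ℕ | ∃ δ : List (Equiv.Perm (Fin n)),
        (∀ s ∈ δ, s = σ n ∨ s = (σ n)⁻¹ ∨ s = τ) ∧ δ.prod = σ l ∧ δ.length = m}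
      ≤ 3 * (n - l) + 1 := by
  obtain ⟨N, rfl⟩ : ∃ N, n = N + 1 := ⟨n - 1, by omega⟩
  have h_word :
      σ l = σ (N + 1) * ((σ (N + 1))⁻¹ * τ) ^ (N + 1 - l) * σ (N + 1) ^ (N + 1 - l) := by
    have h_rotate : σ (N + 1) = finRotate (N + 1) := by
      rw [hσ (N + 1) (by omega) le_rfl]
      exact Fin.cycleRange_last N
    have h_swap : τ = swap 0 (Fin.last N) := hτ
    have h_exp : N + 1 - l = N - ((⟨l - 1, by omega⟩ : Fin (N + 1)) : ℕ) := by simp; omega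
    rw [hσ l hl1 hln, h_rotate, h_swap, h_exp,
      Fin.finRotate_mul_inv_mul_swap_pow_mul_finRotate_pow]
  refine ⟨h_word, Nat.sInf_le ?_⟩
  obtain ⟨δ, hδ, h_prod, h_len⟩ :=
    exists_list_prod_eq_mul_inv_mul_pow_mul_pow (σ (N + 1)) τ (N + 1 - l)
  exact ⟨δ, hδ, h_prod.trans h_word.symm, h_len⟩
end
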